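/- Let A be a real n×n matrix with xᵀAx > 0 for all nonzero real x, C a real m×m symmetric positive semidefinite matrix, B a real m×n matrix of full row rank, and α, β > 0, and let M = (1/2)·[[αI + A, Bᵀ], [−B, βI + C]] and N = (1/2)·[[αI − A, −Bᵀ], [B, βI − C]]. Then for every right-hand side b ∈ ℝ^{n+m} and every initial guess u⁽⁰⁾ ∈ ℝ^{n+m}, the stationary iteration u⁽ᵏ⁺¹⁾ = M⁻¹(N u⁽ᵏ⁾ + b) converges (as k → ∞) to the unique solution u* of the generalized saddle point system 𝒜u = b, where 𝒜 = [[A, Bᵀ], [−B, C]] = M − N. -/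

import Mathlib

/-!
Write `D = diag(αI, βI)` and `𝒜 = [[A, Bᵀ], [-B, C]]`, so that `M = (D + 𝒜)/2` and `N = (D - 𝒜)/2`.
The images `w = M e` of the errors `e = u⁽ᵏ⁾ - u*` evolve by `G = N M⁻¹ = (D - 𝒜)(D + 𝒜)⁻¹`.
For `w = (D + 𝒜) z` one has `G w = (D - 𝒜) z`, and in the norm `‖w‖² = wᵀ D⁻¹ w`
  `‖w‖² - ‖G w‖² = 4 zᵀ𝒜z = 4 (xᵀAx + yᵀCy) ≥ 0`   (`z = (x, y)`).
The decrease is strict unless `x = 0`, and two consecutive steps with `x = 0` force `z = 0`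
(injectivity of `Bᵀ` and `β > 0`). Hence `‖G² w‖ < ‖w‖` for `w ≠ 0`; by compactness of the unit
sphere `G²` is a strict contraction, so `Gᵏ → 0`.
-/

open Matrix

/-- The shift-splitting matrix `M = (1/2)⬝[[αI + A, Bᵀ], [−B, βI + C]]`. -/
noncomputable def MSS {n m : ℕ} (A : Matrix (Fin n) (Fin n) ℝ) (B : Matrix (Fin m) (Fin n) ℝ)
    (C : Matrix (Fin m) (Fin m) ℝ) (α β : ℝ) :
    Matrix (Fin n ⊕ Fin m) (Fin n ⊕ Fin m) ℝ :=
  (1 / 2 : ℝ) • Matrix.fromBlocks (α • (1 : Matrix (Fin n) (Fin n) ℝ) + A) Bᵀ (-B)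
    (β • (1 : Matrix (Fin m) (Fin m) ℝ) + C)

/-- The shift-splitting matrix `N = (1/2)⬝[[αI − A, −Bᵀ], [B, βI − C]]`. -/
noncomputable def NSS {n m : ℕ} (A : Matrix (Fin n) (Fin n) ℝ) (B : Matrix (Fin m) (Fin n) ℝ)
    (C : Matrix (Fin m) (Fin m) ℝ) (α β : ℝ) :
    Matrix (Fin n ⊕ Fin m) (Fin n ⊕ Fin m) ℝ :=
  (1 / 2 : ℝ) • Matrix.fromBlocks (α • (1 : Matrix (Fin n) (Fin n) ℝ) - A) (-Bᵀ) B
    (β • (1 : Matrix (Fin m) (Fin m) ℝ) - C)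

open Filter Topology WithLp

namespace ContinuousLinearMap
variable {E : Type*} [NormedAddCommGroup E] [NormedSpace ℝ E] [FiniteDimensional ℝ E]

theorem norm_lt_one_of_norm_apply_lt (T : E →L[ℝ] E) (hT : ∀ x ≠ 0, ‖T x‖ < ‖x‖) : ‖T‖ < 1 := by
  rcases subsingleton_or_nontrivial E with _ | _
  · simp [opNorm_subsingleton]
  obtain ⟨x, hx, hTx⟩ : ‖T‖ ∈ (fun x => ‖T x‖) '' Metric.sphere 0 1 := by
    rw [← T.sSup_sphere_eq_norm]
    exact ((isCompact_sphere 0 1).image (by fun_prop)).sSup_mem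
      ((NormedSpace.sphere_nonempty.mpr zero_le_one).image _)
  have hx1 : ‖x‖ = 1 := mem_sphere_zero_iff_norm.mp hx
  rw [← hTx, ← hx1]
  exact hT x (by rintro rfl; simp at hx1)

theorem tendsto_pow_apply_of_norm_pow_apply_lt (T : E →L[ℝ] E) {N : ℕ} (hN : N ≠ 0)
    (hT : ∀ x ≠ 0, ‖(T ^ N) x‖ < ‖x‖) (x : E) :
    Tendsto (fun k => (T ^ k) x) atTop (𝓝 0) := by
  have hpow : Tendsto (fun k => ‖(T ^ N) ^ (k / N)‖) atTop (𝓝 0) := by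
    simpa using ((tendsto_pow_atTop_nhds_zero_of_norm_lt_one
      (norm_lt_one_of_norm_apply_lt _ hT)).comp (Nat.tendsto_div_const_atTop hN)).norm
  refine squeeze_zero_norm (fun k => ?_)
    (by simpa only [zero_mul] using hpow.mul_const (∑ r ∈ Finset.range N, ‖(T ^ r) x‖))
  calc ‖(T ^ k) x‖ = ‖((T ^ N) ^ (k / N)) ((T ^ (k % N)) x)‖ := by
        rw [← mul_apply_eq_comp, ← pow_mul, ← pow_add, Nat.div_add_mod]
    _ ≤ ‖(T ^ N) ^ (k / N)‖ * ‖(T ^ (k % N)) x‖ := le_opNorm _ _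
    _ ≤ ‖(T ^ N) ^ (k / N)‖ * ∑ r ∈ Finset.range N, ‖(T ^ r) x‖ := by
        gcongr
        exact Finset.single_le_sum (f := fun r => ‖(T ^ r) x‖) (fun _ _ => norm_nonneg _)
          (Finset.mem_range.mpr (Nat.mod_lt _ (Nat.pos_of_ne_zero hN)))

end ContinuousLinearMap

def weightedSqNorm {ι : Type*} [Fintype ι] (ω v : ι → ℝ) : ℝ := ∑ i, ω i * v i ^ 2

theorem Matrix.tendsto_pow_mulVec_of_weightedSqNorm_pow_lt {ι : Type*} [Fintype ι]
    [DecidableEq ι] (G : Matrix ι ι ℝ) {ω : ι → ℝ} (hω : ∀ i, 0 < ω i) {N : ℕ} (hN : N ≠ 0)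
    (hG : ∀ v ≠ 0, weightedSqNorm ω ((G ^ N) *ᵥ v) < weightedSqNorm ω v) (v : ι → ℝ) :
    Tendsto (fun k => (G ^ k) *ᵥ v) atTop (𝓝 0) := by
  -- conjugating by `S = diag √ω` turns the weighted norm into the Euclidean one
  have hsqrt (i : ι) : √(ω i) ≠ 0 := (Real.sqrt_pos.mpr (hω i)).ne'
  let S : (Matrix ι ι ℝ)ˣ :=
    ⟨diagonal fun i => √(ω i), diagonal fun i => (√(ω i))⁻¹,
      by simp [diagonal_mul_diagonal, hsqrt], by simp [diagonal_mul_diagonal, hsqrt]⟩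
  have hnorm (v : ι → ℝ) : ‖toLp 2 (S.val *ᵥ v)‖ ^ 2 = weightedSqNorm ω v := by
    simp [S, weightedSqNorm, EuclideanSpace.norm_sq_eq, mulVec_diagonal, mul_pow,
      Real.sq_sqrt (hω _).le]
  let T := toEuclideanCLM (𝕜 := ℝ) (S.val * G * S⁻¹.val)
  have hTpow (k : ℕ) (v : ι → ℝ) :
      (T ^ k) (toLp 2 (S.val *ᵥ v)) = toLp 2 (S.val *ᵥ (G ^ k *ᵥ v)) := by
    rw [← map_pow, Units.conj_pow, toEuclideanCLM_toLp, mulVec_mulVec, Matrix.mul_assoc,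
      Matrix.mul_assoc, Units.inv_mul, Matrix.mul_one, ← mulVec_mulVec]
  have hT : ∀ x ≠ 0, ‖(T ^ N) x‖ < ‖x‖ := by
    intro x hx
    obtain ⟨v, rfl⟩ : ∃ v, x = toLp 2 (S.val *ᵥ v) :=
      ⟨S⁻¹.val *ᵥ ofLp x, by rw [mulVec_mulVec, Units.mul_inv, one_mulVec, toLp_ofLp]⟩
    have hv : v ≠ 0 := by rintro rfl; simp at hx
    rw [hTpow, ← pow_lt_pow_iff_left₀ (norm_nonneg _) (norm_nonneg _) two_ne_zero, hnorm, hnorm]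
    exact hG v hv
  have hback : Continuous fun x : EuclideanSpace ℝ ι => S⁻¹.val *ᵥ ofLp x :=
    continuous_const.matrix_mulVec (PiLp.continuous_ofLp 2 _)
  have hlim := (hback.tendsto 0).comp
    (T.tendsto_pow_apply_of_norm_pow_apply_lt hN hT (toLp 2 (S.val *ᵥ v)))
  simpa only [Function.comp_def, hTpow, ofLp_toLp, mulVec_mulVec, ← Matrix.mul_assoc,
    Units.inv_mul, Matrix.one_mul, ofLp_zero, mulVec_zero] using hlim

theorem Matrix.tendsto_iterate_of_splitting {ι : Type*} [Fintype ι] [DecidableEq ι]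
    {M N : Matrix ι ι ℝ} (hM : IsUnit M.det) {b u : ι → ℝ} (hu : (M - N) *ᵥ u = b)
    (hNM : ∀ w, Tendsto (fun k => (N * M⁻¹) ^ k *ᵥ w) atTop (𝓝 0)) (u₀ : ι → ℝ) :
    Tendsto (fun k => (fun v => M⁻¹ *ᵥ (N *ᵥ v + b))^[k] u₀) atTop (𝓝 u) := by
  set f := fun v => M⁻¹ *ᵥ (N *ᵥ v + b)
  have hMinv (v : ι → ℝ) : M⁻¹ *ᵥ (M *ᵥ v) = v := by
    rw [mulVec_mulVec, nonsing_inv_mul _ hM, one_mulVec]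
  have hstep (v : ι → ℝ) : M *ᵥ (f v - u) = (N * M⁻¹) *ᵥ (M *ᵥ (v - u)) := by
    rw [← mulVec_mulVec, hMinv, mulVec_sub, mulVec_mulVec, mul_nonsing_inv _ hM, one_mulVec, ← hu,
      sub_mulVec, mulVec_sub]
    abel
  have hiter (k : ℕ) : M *ᵥ (f^[k] u₀ - u) = (N * M⁻¹) ^ k *ᵥ (M *ᵥ (u₀ - u)) := by
    induction k with
    | zero => rw [pow_zero, one_mulVec, Function.iterate_zero_apply]
    | succ k ih => rw [Function.iterate_succ_apply', hstep, ih, mulVec_mulVec, ← pow_succ']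
  have hlim : Tendsto (fun k => u + M⁻¹ *ᵥ ((N * M⁻¹) ^ k *ᵥ (M *ᵥ (u₀ - u)))) atTop
      (𝓝 (u + M⁻¹ *ᵥ 0)) :=
    tendsto_const_nhds.add <|
      ((continuous_const.matrix_mulVec continuous_id).tendsto 0).comp (hNM (M *ᵥ (u₀ - u)))
  rw [mulVec_zero, add_zero] at hlim
  refine hlim.congr fun k => ?_
  rw [← hiter, hMinv, add_sub_cancel]

/-- `(D - K)(D + K)⁻¹` with `D = diagonal d`: for the splitting `M = (D + K)/2`, `N = (D - K)/2`
this is `N M⁻¹`, which maps `M e` to `M e'` for consecutive iteration errors `e`, `e'`. -/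
noncomputable def shiftSplittingMatrix {ι : Type*} [Fintype ι] [DecidableEq ι] (d : ι → ℝ)
    (K : Matrix ι ι ℝ) : Matrix ι ι ℝ :=
  (diagonal d - K) * (diagonal d + K)⁻¹

section Accretive
variable {ι : Type*} [Fintype ι] [DecidableEq ι] {d : ι → ℝ} {K : Matrix ι ι ℝ}

theorem Matrix.isUnit_diagonal_add_det (hd : ∀ i, 0 < d i) (hK : ∀ z, 0 ≤ z ⬝ᵥ K *ᵥ z) :
    IsUnit (diagonal d + K).det := by
  rw [isUnit_iff_ne_zero, Ne, ← exists_mulVec_eq_zero_iff]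
  rintro ⟨z, hz, hDKz⟩
  have hD : 0 < z ⬝ᵥ diagonal d *ᵥ z := by
    simpa using (posDef_diagonal_iff.mpr hd).dotProduct_mulVec_pos hz
  have h0 : z ⬝ᵥ diagonal d *ᵥ z + z ⬝ᵥ K *ᵥ z = 0 := by
    rw [← dotProduct_add, ← add_mulVec, hDKz, dotProduct_zero]
  linarith [hK z]

theorem weightedSqNorm_diagonal_sub_mulVec (hd : ∀ i, d i ≠ 0) (z : ι → ℝ) :
    weightedSqNorm d⁻¹ ((diagonal d - K) *ᵥ z) + 4 * (z ⬝ᵥ K *ᵥ z) =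
      weightedSqNorm d⁻¹ ((diagonal d + K) *ᵥ z) := by
  simp only [weightedSqNorm, dotProduct, Finset.mul_sum, ← Finset.sum_add_distrib, sub_mulVec,
    add_mulVec, Pi.sub_apply, Pi.add_apply, Pi.inv_apply, mulVec_diagonal]
  refine Finset.sum_congr rfl fun i _ => ?_
  field_simp [hd i]
  ring

theorem weightedSqNorm_shiftSplittingMatrix_mulVec (hd : ∀ i, 0 < d i)
    (hK : ∀ z, 0 ≤ z ⬝ᵥ K *ᵥ z) (w : ι → ℝ) :
    weightedSqNorm d⁻¹ (shiftSplittingMatrix d K *ᵥ w) +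
        4 * (((diagonal d + K)⁻¹ *ᵥ w) ⬝ᵥ K *ᵥ ((diagonal d + K)⁻¹ *ᵥ w)) =
      weightedSqNorm d⁻¹ w := by
  have hw : w = (diagonal d + K) *ᵥ ((diagonal d + K)⁻¹ *ᵥ w) := by
    rw [mulVec_mulVec, mul_nonsing_inv _ (isUnit_diagonal_add_det hd hK), one_mulVec]
  rw [shiftSplittingMatrix, ← mulVec_mulVec]
  conv_rhs => rw [hw]
  exact weightedSqNorm_diagonal_sub_mulVec (fun i => (hd i).ne') _

end Accretive

theorem Matrix.mulVec_transpose_injective {n m : Type*} [Fintype m] {B : Matrix m n ℝ}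
    (hB : LinearIndependent ℝ B.row) :
    Function.Injective Bᵀ.mulVec := by
  intro u v huv
  apply vecMul_injective_iff.mpr hB
  simpa only [mulVec_transpose] using huv

section Saddle
variable {n m : Type*} [Fintype n] [Fintype m] {A : Matrix n n ℝ} {B : Matrix m n ℝ}
  {C : Matrix m m ℝ}

theorem Matrix.dotProduct_mulVec_nonneg_of_pos (hA : ∀ x ≠ 0, 0 < x ⬝ᵥ A *ᵥ x) (x : n → ℝ) :
    0 ≤ x ⬝ᵥ A *ᵥ x := by
  rcases eq_or_ne x 0 with rfl | hx
  · simp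
  · exact (hA x hx).le

theorem Matrix.sumElim_dotProduct_fromBlocks_mulVec (x : n → ℝ) (y : m → ℝ) :
    (x ⊕ᵥ y) ⬝ᵥ fromBlocks A Bᵀ (-B) C *ᵥ (x ⊕ᵥ y) = x ⬝ᵥ A *ᵥ x + y ⬝ᵥ C *ᵥ y := by
  simp only [fromBlocks_mulVec, Sum.elim_comp_inl, Sum.elim_comp_inr, sumElim_dotProduct_sumElim,
    dotProduct_add, neg_mulVec, dotProduct_neg, mulVec_transpose]
  rw [dotProduct_mulVec y B x, dotProduct_comm (y ᵥ* B)]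
  ring

theorem Matrix.dotProduct_fromBlocks_mulVec_nonneg (hA : ∀ x, 0 ≤ x ⬝ᵥ A *ᵥ x)
    (hC : ∀ y, 0 ≤ y ⬝ᵥ C *ᵥ y) (z : n ⊕ m → ℝ) : 0 ≤ z ⬝ᵥ fromBlocks A Bᵀ (-B) C *ᵥ z := by
  rw [← Sum.elim_comp_inl_inr z, sumElim_dotProduct_fromBlocks_mulVec]
  exact add_nonneg (hA _) (hC _)

theorem Matrix.comp_inl_eq_zero_of_dotProduct_fromBlocks_mulVec_eq_zero
    (hA : ∀ x ≠ 0, 0 < x ⬝ᵥ A *ᵥ x) (hC : ∀ y, 0 ≤ y ⬝ᵥ C *ᵥ y) {z : n ⊕ m → ℝ}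
    (h : z ⬝ᵥ fromBlocks A Bᵀ (-B) C *ᵥ z = 0) : z ∘ Sum.inl = 0 := by
  rw [← Sum.elim_comp_inl_inr z, sumElim_dotProduct_fromBlocks_mulVec] at h
  by_contra hx
  linarith [hA _ hx, hC (z ∘ Sum.inr)]

variable [DecidableEq n] [DecidableEq m]

theorem Matrix.isUnit_fromBlocks_det (hA : ∀ x ≠ 0, 0 < x ⬝ᵥ A *ᵥ x) (hC : ∀ y, 0 ≤ y ⬝ᵥ C *ᵥ y)
    (hB : LinearIndependent ℝ B.row) : IsUnit (fromBlocks A Bᵀ (-B) C).det := by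
  rw [isUnit_iff_ne_zero, Ne, ← exists_mulVec_eq_zero_iff]
  rintro ⟨z, hz, h0⟩
  have hx : z ∘ Sum.inl = 0 :=
    comp_inl_eq_zero_of_dotProduct_fromBlocks_mulVec_eq_zero hA hC (by rw [h0, dotProduct_zero])
  rw [← Sum.elim_comp_inl_inr z, hx, fromBlocks_mulVec, ← Sum.elim_zero_zero, Sum.elim_eq_iff]
    at h0
  have hy : z ∘ Sum.inr = 0 := mulVec_transpose_injective hB (by simpa using h0.1)
  exact hz (by rw [← Sum.elim_comp_inl_inr z, hx, hy, Sum.elim_zero_zero])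

variable {d : n ⊕ m → ℝ}

theorem Matrix.eq_zero_of_diagonal_add_fromBlocks_mulVec_eq (hd : ∀ i, d (Sum.inr i) ≠ 0)
    (hB : LinearIndependent ℝ B.row) {z z' : n ⊕ m → ℝ} (hx : z ∘ Sum.inl = 0)
    (hx' : z' ∘ Sum.inl = 0)
    (h : (diagonal d + fromBlocks A Bᵀ (-B) C) *ᵥ z' = (diagonal d - fromBlocks A Bᵀ (-B) C) *ᵥ z) :
    z = 0 := by
  obtain ⟨y, rfl⟩ : ∃ y : m → ℝ, z = (0 : n → ℝ) ⊕ᵥ y :=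
    ⟨z ∘ Sum.inr, by rw [← hx, Sum.elim_comp_inl_inr]⟩
  obtain ⟨y', rfl⟩ : ∃ y' : m → ℝ, z' = (0 : n → ℝ) ⊕ᵥ y' :=
    ⟨z' ∘ Sum.inr, by rw [← hx', Sum.elim_comp_inl_inr]⟩
  rw [← Sum.elim_comp_inl_inr d, ← fromBlocks_diagonal] at h
  simp only [add_mulVec, sub_mulVec, fromBlocks_mulVec, Sum.elim_comp_inl, Sum.elim_comp_inr,
    mulVec_zero, zero_mulVec, add_zero, zero_add] at h
  rw [← Sum.elim_add_add, ← Sum.elim_sub_sub, Sum.elim_eq_iff] at h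
  simp only [zero_add, zero_sub] at h
  obtain ⟨hBy, hCy⟩ := h
  have hy' : y' = -y := eq_neg_of_add_eq_zero_left <| mulVec_transpose_injective hB <| by
    rw [mulVec_add, hBy, neg_add_cancel, mulVec_zero]
  have hy : y = 0 := by
    funext i
    have := congrFun hCy i
    simp only [hy', Pi.add_apply, Pi.sub_apply, mulVec_neg, Pi.neg_apply, mulVec_diagonal,
      Function.comp_apply] at this
    simpa [hd i] using (by linarith : d (Sum.inr i) * y i = 0)
  rw [hy, Sum.elim_zero_zero]

theorem weightedSqNorm_shiftSplittingMatrix_sq_mulVec_lt (hd : ∀ i, 0 < d i)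
    (hA : ∀ x ≠ 0, 0 < x ⬝ᵥ A *ᵥ x) (hC : ∀ y, 0 ≤ y ⬝ᵥ C *ᵥ y) (hB : LinearIndependent ℝ B.row)
    {w : n ⊕ m → ℝ} (hw : w ≠ 0) :
    weightedSqNorm d⁻¹ ((shiftSplittingMatrix d (fromBlocks A Bᵀ (-B) C) ^ 2) *ᵥ w) <
      weightedSqNorm d⁻¹ w := by
  set K := fromBlocks A Bᵀ (-B) C
  set G := shiftSplittingMatrix d K
  have hK : ∀ z, 0 ≤ z ⬝ᵥ K *ᵥ z :=
    dotProduct_fromBlocks_mulVec_nonneg (dotProduct_mulVec_nonneg_of_pos hA) hC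
  have hS := isUnit_diagonal_add_det hd hK
  set z := (diagonal d + K)⁻¹ *ᵥ w
  set z' := (diagonal d + K)⁻¹ *ᵥ (G *ᵥ w)
  have h1 := weightedSqNorm_shiftSplittingMatrix_mulVec hd hK w
  have h2 := weightedSqNorm_shiftSplittingMatrix_mulVec hd hK (G *ᵥ w)
  rw [sq, ← mulVec_mulVec]
  by_contra hle
  have hq : z ⬝ᵥ K *ᵥ z = 0 := by linarith [hK z, hK z']
  have hq' : z' ⬝ᵥ K *ᵥ z' = 0 := by linarith [hK z, hK z']
  have hzz' : (diagonal d + K) *ᵥ z' = (diagonal d - K) *ᵥ z := by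
    simp only [z, z', G, shiftSplittingMatrix, mulVec_mulVec, ← Matrix.mul_assoc,
      mul_nonsing_inv _ hS, Matrix.one_mul]
  have hz : z = 0 := eq_zero_of_diagonal_add_fromBlocks_mulVec_eq (fun i => (hd _).ne') hB
    (comp_inl_eq_zero_of_dotProduct_fromBlocks_mulVec_eq_zero hA hC hq)
    (comp_inl_eq_zero_of_dotProduct_fromBlocks_mulVec_eq_zero hA hC hq') hzz'
  apply hw
  calc w = (diagonal d + K) *ᵥ z := by rw [mulVec_mulVec, mul_nonsing_inv _ hS, one_mulVec]
    _ = 0 := by rw [hz, mulVec_zero]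

theorem tendsto_pow_shiftSplittingMatrix_fromBlocks_mulVec (hd : ∀ i, 0 < d i)
    (hA : ∀ x ≠ 0, 0 < x ⬝ᵥ A *ᵥ x) (hC : ∀ y, 0 ≤ y ⬝ᵥ C *ᵥ y) (hB : LinearIndependent ℝ B.row)
    (w : n ⊕ m → ℝ) :
    Tendsto (fun k => shiftSplittingMatrix d (fromBlocks A Bᵀ (-B) C) ^ k *ᵥ w) atTop (𝓝 0) :=
  tendsto_pow_mulVec_of_weightedSqNorm_pow_lt _ (fun i => inv_pos.mpr (hd i)) two_ne_zero
    (fun _ hw => weightedSqNorm_shiftSplittingMatrix_sq_mulVec_lt hd hA hC hB hw) w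

end Saddle

section ShiftSplitting
variable {n m : ℕ} (A : Matrix (Fin n) (Fin n) ℝ) (B : Matrix (Fin m) (Fin n) ℝ)
  (C : Matrix (Fin m) (Fin m) ℝ) (α β : ℝ)

theorem MSS_eq : MSS A B C α β =
    (1 / 2 : ℝ) • (diagonal ((fun _ => α) ⊕ᵥ fun _ => β) + fromBlocks A Bᵀ (-B) C) := by
  rw [MSS, ← fromBlocks_diagonal, fromBlocks_add, ← smul_one_eq_diagonal, ← smul_one_eq_diagonal]
  simp

theorem NSS_eq : NSS A B C α β =
    (1 / 2 : ℝ) • (diagonal ((fun _ => α) ⊕ᵥ fun _ => β) - fromBlocks A Bᵀ (-B) C) := by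
  rw [NSS, ← fromBlocks_diagonal, ← smul_one_eq_diagonal, ← smul_one_eq_diagonal,
    sub_eq_add_neg (fromBlocks _ _ _ _), fromBlocks_neg, fromBlocks_add]
  simp [sub_eq_add_neg]

theorem MSS_sub_NSS : MSS A B C α β - NSS A B C α β = fromBlocks A Bᵀ (-B) C := by
  rw [MSS_eq, NSS_eq, ← smul_sub, add_sub_sub_cancel, ← two_smul ℝ, smul_smul]
  norm_num

variable {A B C α β}

theorem isUnit_MSS_det
    (h : IsUnit (diagonal ((fun _ => α) ⊕ᵥ fun _ => β) + fromBlocks A Bᵀ (-B) C).det) :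
    IsUnit (MSS A B C α β).det := by
  rw [MSS_eq, det_smul]
  exact (isUnit_iff_ne_zero.mpr (by norm_num)).mul h

theorem NSS_mul_inv_MSS
    (h : IsUnit (diagonal ((fun _ => α) ⊕ᵥ fun _ => β) + fromBlocks A Bᵀ (-B) C).det) :
    NSS A B C α β * (MSS A B C α β)⁻¹ =
      shiftSplittingMatrix ((fun _ => α) ⊕ᵥ fun _ => β) (fromBlocks A Bᵀ (-B) C) := by
  have : Invertible (1 / 2 : ℝ) := invertibleOfNonzero (by norm_num)
  rw [MSS_eq, NSS_eq, Matrix.inv_smul _ (1 / 2 : ℝ) h, smul_mul_smul_comm, invOf_eq_inv, one_div,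
    inv_inv, inv_mul_cancel₀ two_ne_zero, one_smul, shiftSplittingMatrix]

end ShiftSplitting

/-- In the shift-splitting setting, for every right-hand side `b` and
every initial guess `u⁰`, the stationary iteration `u⁽ᵏ⁺¹⁾ = M⁻¹(N u⁽ᵏ⁾ + b)` converges to
the unique solution `u*` of the generalized saddle point system `𝒜 u = b`, where
`𝒜 = [[A, Bᵀ], [−B, C]] = M − N`. -/
theorem MGSS_iteration_converges
    (n m : ℕ) (A : Matrix (Fin n) (Fin n) ℝ)
    (hA : ∀ x : Fin n → ℝ, x ≠ 0 → 0 < x ⬝ᵥ A.mulVec x)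
    (C : Matrix (Fin m) (Fin m) ℝ) (hC : C.PosSemidef)
    (B : Matrix (Fin m) (Fin n) ℝ) (hB : B.rank = m)
    (α β : ℝ) (hα : 0 < α) (hβ : 0 < β) :
    ∀ b u0 : Fin n ⊕ Fin m → ℝ, ∃ ustar : Fin n ⊕ Fin m → ℝ,
      (Matrix.fromBlocks A Bᵀ (-B) C).mulVec ustar = b ∧
      (∀ v : Fin n ⊕ Fin m → ℝ,
        (Matrix.fromBlocks A Bᵀ (-B) C).mulVec v = b → v = ustar) ∧
      Filter.Tendsto
        (fun k : ℕ =>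
          (fun v : Fin n ⊕ Fin m → ℝ =>
            (MSS A B C α β)⁻¹.mulVec ((NSS A B C α β).mulVec v + b))^[k] u0)
        Filter.atTop (nhds ustar) := by
  intro b u₀
  have hC₀ : ∀ y, 0 ≤ y ⬝ᵥ C *ᵥ y := fun y => by simpa using hC.dotProduct_mulVec_nonneg y
  have hB' : LinearIndependent ℝ B.row := by
    rw [linearIndependent_iff_card_eq_finrank_span, Fintype.card_fin, Set.finrank,
      ← rank_eq_finrank_span_row, hB]
  have h𝒜 : IsUnit (fromBlocks A Bᵀ (-B) C) :=
    (isUnit_iff_isUnit_det _).mpr (isUnit_fromBlocks_det hA hC₀ hB')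
  obtain ⟨u, hu⟩ := mulVec_surjective_iff_isUnit.mpr h𝒜 b
  refine ⟨u, hu, fun v hv => mulVec_injective_iff_isUnit.mpr h𝒜 (hv.trans hu.symm), ?_⟩
  have hd : ∀ i, 0 < ((fun _ => α) ⊕ᵥ (fun _ => β) : Fin n ⊕ Fin m → ℝ) i := by
    rintro (i | i) <;> assumption
  have hS := isUnit_diagonal_add_det hd
    (dotProduct_fromBlocks_mulVec_nonneg (B := B) (dotProduct_mulVec_nonneg_of_pos hA) hC₀)
  refine tendsto_iterate_of_splitting (isUnit_MSS_det hS) (by rwa [MSS_sub_NSS]) (fun w => ?_) u₀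
  rw [NSS_mul_inv_MSS hS]
  exact tendsto_pow_shiftSplittingMatrix_fromBlocks_mulVec hd hA hC₀ hB' w
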